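/- arXiv:math/0601609 — 2 statements merged into one kernel-verified Lean document; each statement's English description precedes it below -/
import Mathlib

section
/- Let E ⊂ 𝕋 be a K-set with constant c ∈ (0,1), i.e. sup_{z∈L} d(z,E) ≥ c|L| for every arc L. Then ∫_0^{2π} d(e^{it},E)^{-δ} dt < ∞ for every δ < log(1/(1-c)) / log(2/(1-c)). In particular δ(E) ≥ log(1/(1-c))/log(2/(1-c)) > 0. -/
open Real MeasureTheory ENNReal


lemma lip9 (s t : ℝ) :
    dist (Complex.exp (s * Complex.I)) (Complex.exp (t * Complex.I)) ≤ |s - t| := by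
  have key : ∀ u : ℝ, ‖Complex.exp (u * Complex.I) - 1‖ ≤ |u| := by
    intro u
    have he : Complex.exp (u * Complex.I) - 1
        = Complex.ofReal (Real.cos u - 1) + Complex.ofReal (Real.sin u) * Complex.I := by
      rw [Complex.exp_mul_I]
      push_cast
      ring
    rw [he, Complex.norm_add_mul_I]
    have h1 : (Real.cos u - 1) ^ 2 + Real.sin u ^ 2 = (2 * Real.sin (u / 2)) ^ 2 := by
      have h2 : Real.cos (2 * (u / 2)) = Real.cos (u / 2) ^ 2 - Real.sin (u / 2) ^ 2 :=
        Real.cos_two_mul' _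
      have h3 : Real.sin (u / 2) ^ 2 + Real.cos (u / 2) ^ 2 = 1 := Real.sin_sq_add_cos_sq _
      have h4 : Real.sin u ^ 2 + Real.cos u ^ 2 = 1 := Real.sin_sq_add_cos_sq _
      have h5 : (2 : ℝ) * (u / 2) = u := by ring
      rw [h5] at h2
      nlinarith
    rw [h1, Real.sqrt_sq_eq_abs]
    calc |2 * Real.sin (u / 2)| = 2 * |Real.sin (u / 2)| := by rw [abs_mul]; norm_num
    _ ≤ 2 * |u / 2| := by have := Real.abs_sin_le_abs (x := u / 2); linarith
    _ = |u| := by rw [abs_div, abs_two]; ring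
  have he2 : Complex.exp (s * Complex.I) - Complex.exp (t * Complex.I)
      = Complex.exp (t * Complex.I) * (Complex.exp (((s - t) : ℝ) * Complex.I) - 1) := by
    rw [mul_sub, mul_one, ← Complex.exp_add]
    push_cast
    ring_nf
  rw [Complex.dist_eq, he2, norm_mul, Complex.norm_exp_ofReal_mul_I, one_mul]
  exact key _



lemma conc9 {s : ℝ} (hs0 : 0 < s) (hs1 : s ≤ 1) {x y : ℝ} (hx : 0 ≤ x) (hy : 0 ≤ y) :
    x ^ s + y ^ s ≤ 2 ^ (1 - s) * (x + y) ^ s := by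
  have hp : 1 ≤ 1 / s := (le_div_iff₀ hs0).2 (by linarith)
  have key := Real.arith_mean_le_rpow_mean (Finset.univ : Finset (Fin 2))
      ![1/2, 1/2] ![x ^ s, y ^ s]
      (by intro i _; fin_cases i <;> norm_num)
      (by norm_num [Fin.sum_univ_two])
      (by intro i _; fin_cases i <;> simp [Real.rpow_nonneg, hx, hy])
      hp
  simp only [Fin.sum_univ_two, Matrix.cons_val_zero, Matrix.cons_val_one, Matrix.head_cons] at key
  rw [one_div_one_div] at key
  have hxs : (x ^ s) ^ (1 / s) = x := by
    rw [← Real.rpow_mul hx, mul_one_div, div_self hs0.ne', Real.rpow_one]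
  have hys : (y ^ s) ^ (1 / s) = y := by
    rw [← Real.rpow_mul hy, mul_one_div, div_self hs0.ne', Real.rpow_one]
  rw [hxs, hys] at key
  have h2 : ((1:ℝ)/2 * x + 1/2 * y) ^ s = (1/2) ^ s * (x + y) ^ s := by
    rw [← Real.mul_rpow (by norm_num) (by linarith)]
    ring_nf
  rw [h2] at key
  have h3 : (2:ℝ) ^ (1 - s) = 2 * (1/2) ^ s := by
    rw [Real.rpow_sub two_pos, Real.rpow_one, one_div, Real.inv_rpow (by norm_num : (0:ℝ) ≤ 2)]
    rw [div_eq_mul_inv]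
  rw [h3]
  nlinarith [key]


lemma base9 {β K h : ℝ} (hβ0 : 0 < β) (hβ1 : β < 1) (hK1 : 1 ≤ K) (hh : 0 < h)
    (f : ℝ → ℝ) {a b : ℝ} (hab : a ≤ b) (hbK : b - a ≤ K * h) :
    volume {t | t ∈ Set.Icc a b ∧ f t ≤ h} ≤ ENNReal.ofReal (K * h ^ β * (b - a) ^ (1 - β)) := by
  have h1 : volume {t | t ∈ Set.Icc a b ∧ f t ≤ h} ≤ volume (Set.Icc a b) :=
    measure_mono fun t ht => ht.1
  rw [Real.volume_Icc] at h1
  refine h1.trans (ENNReal.ofReal_le_ofReal ?_)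
  rcases eq_or_lt_of_le (sub_nonneg.2 hab) with h0 | h0
  · rw [← h0]
    have hz : (0:ℝ) ^ (1 - β) = 0 := Real.zero_rpow (by intro hc; linarith [hc]; )
    rw [hz, mul_zero]
  · have e1 : b - a = (b - a) ^ β * (b - a) ^ (1 - β) := by
      have hb1 : β + (1 - β) = 1 := by ring
      rw [← Real.rpow_add h0, hb1, Real.rpow_one]
    have e2 : (b - a) ^ β ≤ K * h ^ β := by
      calc (b - a) ^ β ≤ (K * h) ^ β := Real.rpow_le_rpow h0.le hbK hβ0.le
      _ = K ^ β * h ^ β := Real.mul_rpow (by linarith) hh.le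
      _ ≤ K * h ^ β := by
        have hK' : K ^ β ≤ K := by
          have := Real.rpow_le_rpow_of_exponent_le hK1 hβ1.le
          rwa [Real.rpow_one] at this
        have hhb : 0 ≤ h ^ β := Real.rpow_nonneg hh.le β
        nlinarith
    calc b - a = (b - a) ^ β * (b - a) ^ (1 - β) := e1
    _ ≤ K * h ^ β * (b - a) ^ (1 - β) :=
      mul_le_mul_of_nonneg_right e2 (Real.rpow_nonneg h0.le _)

lemma key9 (E : Set ℂ) {c β θ K : ℝ} (hc0 : 0 < c) (hc1 : c < 1)
    (hKs : ∀ a b : ℝ, a < b → b - a ≤ 2 * π → ∃ t ∈ Set.Icc a b,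
      c * (b - a) ≤ Metric.infDist (Complex.exp (t * Complex.I)) E)
    (hβ0 : 0 < β) (hβ1 : β < 1) (hθ0 : 0 < θ) (hθ1 : θ < 1)
    (hθc : ∀ p g : ℝ, 0 < g → K * g < p → (1 - c) * p + g ≤ θ * p)
    (hcon : (2:ℝ) ^ β * θ ^ (1 - β) ≤ 1)
    (hK1 : 1 ≤ K) (hKc : 2 ≤ c * K) {h : ℝ} (hh : 0 < h) :
    ∀ n : ℕ, ∀ a b : ℝ, a ≤ b → b - a ≤ 2 * π → b - a ≤ K * h / θ ^ n →
      volume {t | t ∈ Set.Icc a b ∧ Metric.infDist (Complex.exp (t * Complex.I)) E ≤ h}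
        ≤ ENNReal.ofReal (K * h ^ β * (b - a) ^ (1 - β)) := by
  intro n
  induction n with
  | zero =>
    intro a b hab h2pi hlen
    exact base9 hβ0 hβ1 hK1 hh _ hab (by simpa using hlen)
  | succ n ih =>
    intro a b hab h2pi hlen
    by_cases hsmall : b - a ≤ K * h
    · exact base9 hβ0 hβ1 hK1 hh _ hab hsmall
    push_neg at hsmall
    set p := b - a with hpdef
    have hKpos : 0 < K := lt_of_lt_of_le one_pos hK1
    have hKh0 : 0 < K * h := mul_pos hKpos hh
    have hp0 : 0 < p := hKh0.trans hsmall
    obtain ⟨t₀, ht₀mem, ht₀⟩ := hKs a b (by linarith) h2pi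
    have ht₀' : c * p ≤ Metric.infDist (Complex.exp (t₀ * Complex.I)) E := by
      rw [hpdef]; exact ht₀
    set r := c * p - h with hrdef
    have hr0 : 0 < r := by
      have e1 := mul_lt_mul_of_pos_left hsmall hc0
      have e2 := mul_le_mul_of_nonneg_right hKc hh.le
      simp only [hrdef]
      nlinarith [e1, e2]
    set u := t₀ - r with hudef
    set v := t₀ + r with hvdef
    set a₂ := min b (max a u) with ha2def
    set b₂ := max a (min b v) with hb2def
    have ha₂a : a ≤ a₂ := le_min hab (le_max_left a u)
    have ha₂b : a₂ ≤ b := min_le_left _ _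
    have hb₂a : a ≤ b₂ := le_max_left _ _
    have hb₂b : b₂ ≤ b := max_le hab (min_le_left b v)
    have hta : a ≤ t₀ := ht₀mem.1
    have htb : t₀ ≤ b := ht₀mem.2
    have hstep : (1 - c) * p + h ≤ θ * p := hθc p h hh hsmall
    have hcase1 : a₂ - a ≤ 0 ∨ a₂ - a ≤ u - a := by
      rcases le_or_gt u a with h' | h'
      · left
        have : a₂ ≤ a := (min_le_right b _).trans (le_of_eq (max_eq_left h'))
        linarith
      · right
        have : a₂ ≤ u := (min_le_right b _).trans (le_of_eq (max_eq_right h'.le))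
        linarith
    have hcase2 : b - b₂ ≤ 0 ∨ b - b₂ ≤ b - v := by
      rcases le_or_gt b v with h' | h'
      · left
        have : b ≤ b₂ := (le_of_eq (min_eq_left h').symm).trans (le_max_right a _)
        linarith
      · right
        have : v ≤ b₂ := (le_of_eq (min_eq_right h'.le).symm).trans (le_max_right a _)
        linarith
    have hcp : 0 ≤ (1 - c) * p := mul_nonneg (by linarith) hp0.le
    have hq1 : a₂ - a ≤ (1 - c) * p + h := by
      rcases hcase1 with h' | h' <;> linarith [hcp]
    have hq2 : b - b₂ ≤ (1 - c) * p + h := by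
      rcases hcase2 with h' | h' <;> linarith [hcp]
    have hqsum : (a₂ - a) + (b - b₂) ≤ (1 - c) * p + h := by
      rcases hcase1 with h1' | h1' <;> rcases hcase2 with h2' | h2' <;> linarith [hcp]
    have hsub : {t | t ∈ Set.Icc a b ∧ Metric.infDist (Complex.exp (t * Complex.I)) E ≤ h}
        ⊆ {t | t ∈ Set.Icc a a₂ ∧ Metric.infDist (Complex.exp (t * Complex.I)) E ≤ h}
          ∪ {t | t ∈ Set.Icc b₂ b ∧ Metric.infDist (Complex.exp (t * Complex.I)) E ≤ h} := by
      rintro s ⟨⟨hs1, hs2⟩, hsd⟩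
      have hout : s ≤ u ∨ v ≤ s := by
        by_contra hco
        push_neg at hco
        obtain ⟨hco1, hco2⟩ := hco
        have hdle := Metric.infDist_le_infDist_add_dist
          (x := Complex.exp (t₀ * Complex.I)) (y := Complex.exp (s * Complex.I)) (s := E)
        have hl := lip9 t₀ s
        have habs : |t₀ - s| < r := abs_sub_lt_iff.2 ⟨by linarith, by linarith⟩
        linarith
      rcases hout with h' | h'
      · left; exact ⟨⟨hs1, le_min hs2 (le_max_of_le_right h')⟩, hsd⟩
      · right; exact ⟨⟨max_le hs1 ((min_le_right b v).trans h'), hs2⟩, hsd⟩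
    have hθp : θ * p ≤ p := by
      have := mul_le_mul_of_nonneg_right hθ1.le hp0.le
      linarith
    have hθn : (0:ℝ) < θ ^ n := pow_pos hθ0 n
    have hθn1 : (0:ℝ) < θ ^ (n + 1) := pow_pos hθ0 _
    have hlen' : p * θ ^ (n + 1) ≤ K * h := (le_div_iff₀ hθn1).1 hlen
    have hlen2 : θ * p ≤ K * h / θ ^ n := by
      rw [le_div_iff₀ hθn]
      calc θ * p * θ ^ n = p * θ ^ (n + 1) := by rw [pow_succ]; ring
      _ ≤ K * h := hlen'
    have hq1' : a₂ - a ≤ θ * p := hq1.trans hstep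
    have hq2' : b - b₂ ≤ θ * p := hq2.trans hstep
    have hv1 := ih a a₂ ha₂a ((hq1'.trans hθp).trans h2pi) (hq1'.trans hlen2)
    have hv2 := ih b₂ b hb₂b ((hq2'.trans hθp).trans h2pi) (hq2'.trans hlen2)
    have hfinal : K * h ^ β * (a₂ - a) ^ (1 - β) + K * h ^ β * (b - b₂) ^ (1 - β)
        ≤ K * h ^ β * p ^ (1 - β) := by
      have hcc := conc9 (s := 1 - β) (by linarith) (by linarith)
        (x := a₂ - a) (y := b - b₂) (by linarith) (by linarith)
      have he : (1:ℝ) - (1 - β) = β := by ring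
      rw [he] at hcc
      have h1 : ((a₂ - a) + (b - b₂)) ^ (1 - β) ≤ (θ * p) ^ (1 - β) :=
        Real.rpow_le_rpow (by linarith) (hqsum.trans hstep) (by linarith)
      have h2 : (θ * p) ^ (1 - β) = θ ^ (1 - β) * p ^ (1 - β) := Real.mul_rpow hθ0.le hp0.le
      have hp1 : (0:ℝ) ≤ p ^ (1 - β) := Real.rpow_nonneg hp0.le _
      have h2β : (0:ℝ) ≤ (2:ℝ) ^ β := Real.rpow_nonneg (by norm_num) _
      have hθ1β : (0:ℝ) ≤ θ ^ (1 - β) := Real.rpow_nonneg hθ0.le _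
      rw [h2] at h1
      have h3 : (a₂ - a) ^ (1 - β) + (b - b₂) ^ (1 - β) ≤ p ^ (1 - β) := by
        linarith [hcc, mul_le_mul_of_nonneg_left h1 h2β,
          mul_le_mul_of_nonneg_right hcon hp1]
      have hKpos : 0 < K := lt_of_lt_of_le one_pos hK1
      have hKh : (0:ℝ) ≤ K * h ^ β := mul_nonneg hKpos.le (Real.rpow_nonneg hh.le _)
      have := mul_le_mul_of_nonneg_left h3 hKh
      linarith
    calc volume {t | t ∈ Set.Icc a b ∧ Metric.infDist (Complex.exp (t * Complex.I)) E ≤ h}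
        ≤ volume ({t | t ∈ Set.Icc a a₂ ∧ Metric.infDist (Complex.exp (t * Complex.I)) E ≤ h}
          ∪ {t | t ∈ Set.Icc b₂ b ∧ Metric.infDist (Complex.exp (t * Complex.I)) E ≤ h}) :=
          measure_mono hsub
    _ ≤ volume {t | t ∈ Set.Icc a a₂ ∧ Metric.infDist (Complex.exp (t * Complex.I)) E ≤ h}
        + volume {t | t ∈ Set.Icc b₂ b ∧ Metric.infDist (Complex.exp (t * Complex.I)) E ≤ h} :=
          measure_union_le _ _
    _ ≤ ENNReal.ofReal (K * h ^ β * (a₂ - a) ^ (1 - β))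
        + ENNReal.ofReal (K * h ^ β * (b - b₂) ^ (1 - β)) := add_le_add hv1 hv2
    _ = ENNReal.ofReal (K * h ^ β * (a₂ - a) ^ (1 - β) + K * h ^ β * (b - b₂) ^ (1 - β)) :=
          (ENNReal.ofReal_add
            (mul_nonneg (mul_nonneg (by linarith [lt_of_lt_of_le one_pos hK1])
              (Real.rpow_nonneg hh.le _)) (Real.rpow_nonneg (by linarith) _))
            (mul_nonneg (mul_nonneg (by linarith [lt_of_lt_of_le one_pos hK1])
              (Real.rpow_nonneg hh.le _)) (Real.rpow_nonneg (by linarith) _))).symm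
    _ ≤ ENNReal.ofReal (K * h ^ β * p ^ (1 - β)) := ENNReal.ofReal_le_ofReal hfinal


set_option maxHeartbeats 1000000 in
/-- Dyn'kin's lower bound on the critical exponent `δ(E)` of a K-set. -/
theorem stmt9 (E : Set ℂ) (hE : IsClosed E) (hEsub : E ⊆ Metric.sphere (0:ℂ) 1)
    (hEne : E.Nonempty) (c : ℝ) (hc0 : 0 < c) (hc1 : c < 1)
    (hK : ∀ a b : ℝ, a < b → b - a ≤ 2 * Real.pi →
      ∃ t ∈ Set.Icc a b, c * (b - a) ≤ Metric.infDist (Complex.exp (t * Complex.I)) E) :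
    0 < Real.log (1 / (1 - c)) / Real.log (2 / (1 - c)) ∧
    ∀ δ : ℝ, 0 < δ → δ < Real.log (1 / (1 - c)) / Real.log (2 / (1 - c)) →
      (∫⁻ t in Set.Ioo (0:ℝ) (2 * Real.pi),
        ENNReal.ofReal ((Metric.infDist (Complex.exp (t * Complex.I)) E) ^ (-δ))) < ⊤ := by
  have h1c0 : 0 < 1 - c := by linarith
  have hL0 : 0 < Real.log (1 / (1 - c)) := Real.log_pos (by rw [lt_div_iff₀ h1c0]; linarith)
  have hM0 : 0 < Real.log (2 / (1 - c)) := Real.log_pos (by rw [lt_div_iff₀ h1c0]; linarith)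
  refine ⟨div_pos hL0 hM0, ?_⟩
  intro δ hδ0 hδγ
  have h1c : 0 < 1 - c := by linarith
  have hL : 0 < Real.log (1 / (1 - c)) := Real.log_pos (by rw [lt_div_iff₀ h1c]; linarith)
  have hM : 0 < Real.log (2 / (1 - c)) := Real.log_pos (by rw [lt_div_iff₀ h1c]; linarith)
  set γ := Real.log (1 / (1 - c)) / Real.log (2 / (1 - c)) with hγdef
  set β := (δ + γ) / 2 with hβdef
  have hδβ : δ < β := by rw [hβdef]; linarith
  have hβγ : β < γ := by rw [hβdef]; linarith
  have hβ0 : 0 < β := lt_trans hδ0 hδβ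
  have hγ1 : γ < 1 := by
    rw [hγdef, div_lt_one hM]
    exact Real.log_lt_log (by positivity) ((div_lt_div_iff_of_pos_right h1c).2 one_lt_two)
  have hβ1 : β < 1 := lt_trans hβγ hγ1
  have hlog1c : Real.log (1 / (1 - c)) = -Real.log (1 - c) := by rw [one_div, Real.log_inv]
  have hlog2c : Real.log (2 / (1 - c)) = Real.log 2 - Real.log (1 - c) :=
    Real.log_div two_ne_zero h1c.ne'
  have hexp : β * Real.log 2 + (1 - β) * Real.log (1 - c) < 0 := by
    have hβγ' : β < -Real.log (1 - c) / (Real.log 2 - Real.log (1 - c)) := by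
      rw [← hlog1c, ← hlog2c]; exact hβγ
    have hM' : 0 < Real.log 2 - Real.log (1 - c) := by rw [← hlog2c]; exact hM
    have h2 := (lt_div_iff₀ hM').1 hβγ'
    nlinarith [h2]
  have hbc : (2:ℝ) ^ β * (1 - c) ^ (1 - β) < 1 := by
    rw [Real.rpow_def_of_pos two_pos, Real.rpow_def_of_pos h1c, ← Real.exp_add]
    calc Real.exp (Real.log 2 * β + Real.log (1 - c) * (1 - β)) < Real.exp 0 :=
      Real.exp_lt_exp.2 (by nlinarith [hexp])
    _ = 1 := Real.exp_zero
  set R := (2:ℝ) ^ (-β / (1 - β)) with hRdef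
  have hR0 : 0 < R := Real.rpow_pos_of_pos two_pos _
  have hRβ : R ^ (1 - β) = (2:ℝ) ^ (-β) := by
    rw [hRdef, ← Real.rpow_mul (by norm_num : (0:ℝ) ≤ 2)]
    congr 1
    exact div_mul_cancel₀ _ (by linarith : (1:ℝ) - β ≠ 0)
  have h1β : 0 < 1 - β := by linarith
  have h1cR : 1 - c < R := by
    have h2β : (0:ℝ) < (2:ℝ) ^ β := Real.rpow_pos_of_pos two_pos _
    have hlt : (1 - c) ^ (1 - β) < (2:ℝ) ^ (-β) := by
      rw [Real.rpow_neg (by norm_num : (0:ℝ) ≤ 2), ← one_div, lt_div_iff₀ h2β]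
      linarith [hbc]
    have hr := Real.rpow_lt_rpow (Real.rpow_nonneg h1c.le _) hlt
      (by positivity : (0:ℝ) < 1 / (1 - β))
    rw [← Real.rpow_mul h1c.le, ← Real.rpow_mul (by norm_num : (0:ℝ) ≤ 2)] at hr
    have e1 : (1 - β) * (1 / (1 - β)) = 1 := by field_simp
    have e2 : -β * (1 / (1 - β)) = -β / (1 - β) := by ring
    rw [e1, e2, Real.rpow_one] at hr
    rw [hRdef]
    exact hr
  set ε := min (R - (1 - c)) c / 2 with hεdef
  have hε0 : 0 < ε := by
    have hm : 0 < min (R - (1 - c)) c := lt_min (by linarith) hc0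
    rw [hεdef]; linarith
  have hεc : ε < c := by
    have := min_le_right (R - (1 - c)) c
    rw [hεdef]; linarith
  have hεR : 1 - c + ε ≤ R := by
    have := min_le_left (R - (1 - c)) c
    rw [hεdef]; linarith
  set θ := 1 - c + ε with hθdef
  have hθ0 : 0 < θ := by rw [hθdef]; linarith
  have hθ1 : θ < 1 := by rw [hθdef]; linarith
  set K := max ε⁻¹ (2 / c) with hKdef
  have hK1 : 1 ≤ K := le_trans ((le_div_iff₀ hc0).2 (by linarith)) (le_max_right _ _)
  have hKc : 2 ≤ c * K := by
    have h2c : 2 / c ≤ K := le_max_right _ _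
    calc (2:ℝ) = c * (2 / c) := by field_simp
    _ ≤ c * K := mul_le_mul_of_nonneg_left h2c hc0.le
  have hKε : ε⁻¹ ≤ K := le_max_left _ _
  have hθc : ∀ p g : ℝ, 0 < g → K * g < p → (1 - c) * p + g ≤ θ * p := by
    intro p g hg hKg
    have hgε : g < ε * p := by
      have h1 : ε⁻¹ * g ≤ K * g := mul_le_mul_of_nonneg_right hKε hg.le
      have h2 : ε⁻¹ * g < p := lt_of_le_of_lt h1 hKg
      have h3 := mul_lt_mul_of_pos_left h2 hε0
      rwa [← mul_assoc, mul_inv_cancel₀ hε0.ne', one_mul] at h3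
    calc (1 - c) * p + g ≤ (1 - c) * p + ε * p := by linarith
    _ = θ * p := by rw [hθdef]; ring
  have hcon : (2:ℝ) ^ β * θ ^ (1 - β) ≤ 1 := by
    have h1 : θ ^ (1 - β) ≤ R ^ (1 - β) := Real.rpow_le_rpow hθ0.le hεR (by linarith)
    rw [hRβ] at h1
    have h2β : (0:ℝ) < (2:ℝ) ^ β := Real.rpow_pos_of_pos two_pos _
    calc (2:ℝ) ^ β * θ ^ (1 - β) ≤ (2:ℝ) ^ β * (2:ℝ) ^ (-β) :=
      mul_le_mul_of_nonneg_left h1 h2β.le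
    _ = 1 := by rw [← Real.rpow_add two_pos]; norm_num
  have hdcont : Continuous fun t : ℝ => Metric.infDist (Complex.exp (t * Complex.I)) E :=
    (Metric.continuous_infDist_pt E).comp
      (Complex.continuous_exp.comp (Complex.continuous_ofReal.mul continuous_const))
  have hdnn : ∀ t : ℝ, 0 ≤ Metric.infDist (Complex.exp (t * Complex.I)) E :=
    fun t => Metric.infDist_nonneg
  have hkey : ∀ h : ℝ, 0 < h → ∀ n : ℕ, ∀ a b : ℝ, a ≤ b → b - a ≤ 2 * π →
      b - a ≤ K * h / θ ^ n →
      volume {t | t ∈ Set.Icc a b ∧ Metric.infDist (Complex.exp (t * Complex.I)) E ≤ h}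
        ≤ ENNReal.ofReal (K * h ^ β * (b - a) ^ (1 - β)) :=
    fun h hh => key9 E hc0 hc1 hK hβ0 hβ1 hθ0 hθ1 hθc hcon hK1 hKc hh
  have hKpos : 0 < K := lt_of_lt_of_le one_pos hK1
  set S : ℕ → Set ℝ := fun n => {t | (1/2:ℝ)^(n+1) ≤ Metric.infDist (Complex.exp (t * Complex.I)) E ∧ Metric.infDist (Complex.exp (t * Complex.I)) E < (1/2:ℝ)^n} with hSdef
  have hSmeas : ∀ n, MeasurableSet (S n) := fun n =>
    (measurableSet_le measurable_const hdcont.measurable).inter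
      (measurableSet_lt hdcont.measurable measurable_const)
  set cn : ℕ → ℝ≥0∞ := fun n => ENNReal.ofReal ((2:ℝ) ^ (((n:ℝ) + 1) * δ)) with hcndef
  have hpt : ∀ t : ℝ, ENNReal.ofReal (Metric.infDist (Complex.exp (t * Complex.I)) E ^ (-δ))
      ≤ 1 + ∑' n, Set.indicator (S n) (fun _ => cn n) t := by
    intro t
    rcases eq_or_lt_of_le (hdnn t) with h0 | h0
    · rw [← h0, Real.zero_rpow (neg_ne_zero.2 hδ0.ne')]
      simp
    rcases le_or_gt 1 (Metric.infDist (Complex.exp (t * Complex.I)) E) with h1 | h1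
    · exact le_trans (ENNReal.ofReal_le_one.2
        (Real.rpow_le_one_of_one_le_of_nonpos h1 (by linarith))) le_self_add
    · have hne : ∃ m : ℕ, (1/2:ℝ)^m ≤ Metric.infDist (Complex.exp (t * Complex.I)) E := by
        obtain ⟨m, hm⟩ := exists_pow_lt_of_lt_one h0 (by norm_num : (1/2:ℝ) < 1)
        exact ⟨m, hm.le⟩
      have hn₀ : Nat.find hne ≠ 0 := by
        intro hz
        have hsp := Nat.find_spec hne
        rw [hz, pow_zero] at hsp
        linarith
      obtain ⟨n, hn⟩ := Nat.exists_eq_succ_of_ne_zero hn₀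
      have hlow : (1/2:ℝ)^(n+1) ≤ Metric.infDist (Complex.exp (t * Complex.I)) E := by
        have hsp := Nat.find_spec hne
        rwa [hn] at hsp
      have hupp : Metric.infDist (Complex.exp (t * Complex.I)) E < (1/2:ℝ)^n := by
        have hmin := Nat.find_min hne (by omega : n < Nat.find hne)
        exact lt_of_not_ge hmin
      have hmem : t ∈ S n := ⟨hlow, hupp⟩
      have hpow : ((1/2:ℝ)^(n+1)) = (2:ℝ) ^ (-((n:ℝ)+1)) := by
        rw [Real.rpow_neg (by norm_num : (0:ℝ) ≤ 2)]
        have hc : ((n:ℝ) + 1) = ((n + 1 : ℕ) : ℝ) := by push_cast; ring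
        rw [hc, Real.rpow_natCast, one_div, inv_pow]
      have hval : Metric.infDist (Complex.exp (t * Complex.I)) E ^ (-δ) ≤ (2:ℝ) ^ (((n:ℝ)+1) * δ) := by
        have hb0 : (0:ℝ) < (1/2:ℝ)^(n+1) := by positivity
        have h2 : ((1/2:ℝ)^(n+1)) ^ (-δ) = (2:ℝ) ^ (((n:ℝ)+1) * δ) := by
          rw [hpow, ← Real.rpow_mul (by norm_num : (0:ℝ) ≤ 2)]
          congr 1; ring
        rw [← h2]
        exact Real.rpow_le_rpow_of_nonpos hb0 hlow (by linarith)
      calc ENNReal.ofReal (Metric.infDist (Complex.exp (t * Complex.I)) E ^ (-δ)) ≤ cn n := ENNReal.ofReal_le_ofReal hval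
      _ ≤ ∑' m, Set.indicator (S m) (fun _ => cn m) t := by
          have h3 := ENNReal.le_tsum (f := fun m => Set.indicator (S m) (fun _ => cn m) t) n
          rwa [Set.indicator_of_mem hmem] at h3
      _ ≤ 1 + ∑' m, Set.indicator (S m) (fun _ => cn m) t := le_add_self
  have hc1' : (∫⁻ _ in Set.Ioo (0:ℝ) (2 * π), (1:ℝ≥0∞)) = ENNReal.ofReal (2 * π) := by
    rw [setLIntegral_const, one_mul, Real.volume_Ioo, sub_zero]
  have hts : (∫⁻ t in Set.Ioo (0:ℝ) (2 * π), ∑' n, Set.indicator (S n) (fun _ => cn n) t)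
      = ∑' n, cn n * volume (S n ∩ Set.Ioo 0 (2 * π)) := by
    rw [lintegral_tsum (fun n => (measurable_const.indicator (hSmeas n)).aemeasurable)]
    congr 1
    funext n
    rw [lintegral_indicator (hSmeas n), setLIntegral_const,
      Measure.restrict_apply (hSmeas n)]
  have hint : (∫⁻ t in Set.Ioo (0:ℝ) (2 * π), ENNReal.ofReal (Metric.infDist (Complex.exp (t * Complex.I)) E ^ (-δ)))
      ≤ ENNReal.ofReal (2 * π) + ∑' n, cn n * volume (S n ∩ Set.Ioo 0 (2 * π)) := by
    calc ∫⁻ t in Set.Ioo (0:ℝ) (2 * π), ENNReal.ofReal (Metric.infDist (Complex.exp (t * Complex.I)) E ^ (-δ))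
        ≤ ∫⁻ t in Set.Ioo (0:ℝ) (2 * π),
            (1 + ∑' n, Set.indicator (S n) (fun _ => cn n) t) := lintegral_mono hpt
    _ = (∫⁻ _ in Set.Ioo (0:ℝ) (2 * π), (1:ℝ≥0∞))
        + ∫⁻ t in Set.Ioo (0:ℝ) (2 * π), ∑' n, Set.indicator (S n) (fun _ => cn n) t :=
          lintegral_add_left measurable_const _
    _ = ENNReal.ofReal (2 * π) + ∑' n, cn n * volume (S n ∩ Set.Ioo 0 (2 * π)) := by
          rw [hc1', hts]
  have hvol : ∀ n : ℕ, volume (S n ∩ Set.Ioo 0 (2 * π))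
      ≤ ENNReal.ofReal (K * ((1/2:ℝ)^n) ^ β * (2 * π) ^ (1 - β)) := by
    intro n
    have hhn : (0:ℝ) < (1/2:ℝ)^n := by positivity
    have h2π : (0:ℝ) < 2 * π := by positivity
    obtain ⟨m, hm⟩ := exists_pow_lt_of_lt_one
      (show (0:ℝ) < K * ((1/2:ℝ)^n) / (2 * π) by positivity) hθ1
    have hlen : 2 * π - 0 ≤ K * ((1/2:ℝ)^n) / θ ^ m := by
      rw [sub_zero, le_div_iff₀ (pow_pos hθ0 m)]
      have h4 := (lt_div_iff₀ h2π).1 hm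
      linarith [h4]
    have hsubn : S n ∩ Set.Ioo 0 (2 * π) ⊆ {t | t ∈ Set.Icc 0 (2 * π) ∧ Metric.infDist (Complex.exp (t * Complex.I)) E ≤ (1/2:ℝ)^n} := by
      rintro t ⟨⟨_, ht2⟩, ht3⟩
      exact ⟨⟨ht3.1.le, ht3.2.le⟩, ht2.le⟩
    have h5 := hkey ((1/2:ℝ)^n) hhn m 0 (2 * π) (by positivity) (by linarith) hlen
    rw [sub_zero] at h5
    exact (measure_mono hsubn).trans h5
  set ρ := (2:ℝ) ^ (δ - β) with hρdef
  have hρ1 : ρ < 1 := Real.rpow_lt_one_of_one_lt_of_neg one_lt_two (by linarith)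
  have hρ0 : 0 ≤ ρ := (Real.rpow_pos_of_pos two_pos _).le
  set B := (2:ℝ) ^ δ * K * (2 * π) ^ (1 - β) with hBdef
  have hB0 : 0 ≤ B := by positivity
  have hterm : ∀ n : ℕ, cn n * ENNReal.ofReal (K * ((1/2:ℝ)^n) ^ β * (2 * π) ^ (1 - β))
      ≤ ENNReal.ofReal B * (ENNReal.ofReal ρ) ^ n := by
    intro n
    have e0 : ((1/2:ℝ)^n) = (2:ℝ) ^ (-(n:ℝ)) := by
      rw [Real.rpow_neg (by norm_num : (0:ℝ) ≤ 2), Real.rpow_natCast, one_div, inv_pow]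
    have e1 : ((1/2:ℝ)^n) ^ β = (2:ℝ) ^ (-(n:ℝ) * β) := by
      rw [e0, ← Real.rpow_mul (by norm_num : (0:ℝ) ≤ 2)]
    have e2 : ρ ^ n = (2:ℝ) ^ ((δ - β) * (n:ℝ)) := by
      rw [hρdef, ← Real.rpow_natCast ((2:ℝ) ^ (δ - β)) n,
        ← Real.rpow_mul (by norm_num : (0:ℝ) ≤ 2)]
    have e3 : (2:ℝ) ^ (((n:ℝ) + 1) * δ) * (2:ℝ) ^ (-(n:ℝ) * β)
        = (2:ℝ) ^ δ * (2:ℝ) ^ ((δ - β) * (n:ℝ)) := by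
      rw [← Real.rpow_add two_pos, ← Real.rpow_add two_pos]
      congr 1; ring
    have heq : (2:ℝ) ^ (((n:ℝ) + 1) * δ) * (K * ((1/2:ℝ)^n) ^ β * (2 * π) ^ (1 - β))
        = B * ρ ^ n := by
      rw [e1, e2, hBdef]
      linear_combination (K * (2 * π) ^ (1 - β)) * e3
    have hnn : (0:ℝ) ≤ K * ((1/2:ℝ)^n) ^ β * (2 * π) ^ (1 - β) := by positivity
    calc cn n * ENNReal.ofReal (K * ((1/2:ℝ)^n) ^ β * (2 * π) ^ (1 - β))
        = ENNReal.ofReal ((2:ℝ) ^ (((n:ℝ) + 1) * δ) * (K * ((1/2:ℝ)^n) ^ β * (2 * π) ^ (1 - β))) := by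
          rw [hcndef, ← ENNReal.ofReal_mul (Real.rpow_nonneg (by norm_num) _)]
    _ = ENNReal.ofReal (B * ρ ^ n) := by rw [heq]
    _ = ENNReal.ofReal B * ENNReal.ofReal (ρ ^ n) := ENNReal.ofReal_mul hB0
    _ = ENNReal.ofReal B * (ENNReal.ofReal ρ) ^ n := by rw [ENNReal.ofReal_pow hρ0]
    _ ≤ ENNReal.ofReal B * (ENNReal.ofReal ρ) ^ n := le_rfl
  have hsum : ∑' n, cn n * volume (S n ∩ Set.Ioo 0 (2 * π))
      ≤ ENNReal.ofReal B * (1 - ENNReal.ofReal ρ)⁻¹ := by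
    calc ∑' n, cn n * volume (S n ∩ Set.Ioo 0 (2 * π))
        ≤ ∑' n, ENNReal.ofReal B * (ENNReal.ofReal ρ) ^ n :=
          ENNReal.tsum_le_tsum (fun n =>
            le_trans (mul_le_mul_right (hvol n) (cn n)) (hterm n))
    _ = ENNReal.ofReal B * ∑' n, (ENNReal.ofReal ρ) ^ n := ENNReal.tsum_mul_left
    _ = ENNReal.ofReal B * (1 - ENNReal.ofReal ρ)⁻¹ := by rw [ENNReal.tsum_geometric]
  have hfin : ENNReal.ofReal B * (1 - ENNReal.ofReal ρ)⁻¹ < ⊤ :=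
    ENNReal.mul_lt_top ENNReal.ofReal_lt_top
      (ENNReal.inv_lt_top.2 (tsub_pos_iff_lt.2 (ENNReal.ofReal_lt_one.2 hρ1)))
  exact lt_of_le_of_lt (hint.trans (add_le_add_right hsum _))
    (ENNReal.add_lt_top.2 ⟨ENNReal.ofReal_lt_top, hfin⟩)
end

section
/- Let m be a nonnegative integer and f a 2π-periodic C^m function whose m-th derivative is α-Hölder continuous with constant M (0 < α ≤ 1). Then for all j ≥ 0, with h = π/(3·2^j): ∑_{2^j ≤ |n| < 2^{j+1}} |f̂(n)|² n^{2m} sin²(nh) ≤ π M² (2h)^{2α}, where f̂(n) are the Fourier coefficients of f. -/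
open Real MeasureTheory Finset

/-- Fourier coefficient of a `2π`-periodic function `f : ℝ → ℂ`. -/
noncomputable def fourierCoeffR (f : ℝ → ℂ) (n : ℤ) : ℂ :=
  (1 / (2 * Real.pi)) * ∫ t in (0:ℝ)..(2 * Real.pi), f t * Complex.exp (-(n : ℂ) * t * Complex.I)

lemma coeffR_eq (f : ℝ → ℂ) (n : ℤ) : fourierCoeffR f n = fourierCoeffOn Real.two_pi_pos f n := by
  rw [fourierCoeffR, fourierCoeffOn_eq_integral]
  have hπ : (Real.pi : ℂ) ≠ 0 := by exact_mod_cast Real.pi_ne_zero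
  rw [Complex.real_smul]
  push_cast
  rw [sub_zero]
  congr 1
  apply intervalIntegral.integral_congr
  intro x hx
  simp only []
  rw [fourier_coe_apply, smul_eq_mul, mul_comm]
  have : 2 * (Real.pi:ℂ) * Complex.I * (-n) * x / (2 * Real.pi - 0) = -(n:ℂ) * x * Complex.I := by
    field_simp
    ring
  push_cast
  rw [this]

lemma periodic_deriv' {u : ℝ → ℂ} {c : ℝ} (hu : Function.Periodic u c) :
    Function.Periodic (deriv u) c := by
  intro x
  have h1 : (fun y => u (y + c)) = u := funext hu
  rw [← deriv_comp_add_const u c x, h1]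

lemma periodic_iteratedDeriv {u : ℝ → ℂ} {c : ℝ} (hu : Function.Periodic u c) (k : ℕ) :
    Function.Periodic (iteratedDeriv k u) c := by
  induction k with
  | zero => simpa [iteratedDeriv_zero] using hu
  | succ k ih => rw [iteratedDeriv_succ]; exact periodic_deriv' ih

lemma coeffOn_deriv {u : ℝ → ℂ} (hu : Function.Periodic u (2*Real.pi))
    (hud : Differentiable ℝ u) (hc : Continuous (deriv u)) {n : ℤ} (hn : n ≠ 0) :
    fourierCoeffOn Real.two_pi_pos (deriv u) n
      = Complex.I * n * fourierCoeffOn Real.two_pi_pos u n := by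
  have key := fourierCoeffOn_of_hasDerivAt Real.two_pi_pos hn
    (fun x _ => (hud x).hasDerivAt) (hc.intervalIntegrable _ _)
  have h0 : u (2*Real.pi) - u 0 = 0 := by
    rw [sub_eq_zero]; simpa using hu 0
  rw [h0, mul_zero, zero_sub] at key
  have hπ : (Real.pi : ℂ) ≠ 0 := by exact_mod_cast Real.pi_ne_zero
  have hn' : (n : ℂ) ≠ 0 := Int.cast_ne_zero.mpr hn
  have hI := Complex.I_ne_zero
  rw [key]
  push_cast
  field_simp
  ring

lemma coeffOn_iteratedDeriv (m : ℕ) {f : ℝ → ℂ} (hper : Function.Periodic f (2*Real.pi))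
    (hf : ContDiff ℝ (m : ℕ∞) f) {n : ℤ} (hn : n ≠ 0) :
    fourierCoeffOn Real.two_pi_pos (iteratedDeriv m f) n
      = (Complex.I * n) ^ m * fourierCoeffOn Real.two_pi_pos f n := by
  induction m with
  | zero => simp [iteratedDeriv_zero]
  | succ k ih =>
    have hdiff : Differentiable ℝ (iteratedDeriv k f) :=
      hf.differentiable_iteratedDeriv k (by exact_mod_cast Nat.lt_succ_self k)
    have hcont : Continuous (deriv (iteratedDeriv k f)) := by
      rw [← iteratedDeriv_succ]
      exact hf.continuous_iteratedDeriv (k + 1) (by exact_mod_cast le_refl (k+1))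
    rw [iteratedDeriv_succ,
      coeffOn_deriv (periodic_iteratedDeriv hper k) hdiff hcont hn,
      ih (hf.of_le (by exact_mod_cast Nat.le_succ k))]
    ring

lemma coeffR_shift {u : ℝ → ℂ} (hu : Function.Periodic u (2*Real.pi))
    (c : ℝ) (n : ℤ) :
    fourierCoeffR (fun t => u (t + c)) n
      = Complex.exp ((n : ℂ) * c * Complex.I) * fourierCoeffR u n := by
  set w : ℝ → ℂ := fun s => u s * Complex.exp (-(n : ℂ) * s * Complex.I) with hw
  have hwper : Function.Periodic w (2*Real.pi) := by
    intro x
    simp only [hw]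
    rw [hu x]
    congr 1
    rw [show (-(n:ℂ) * (↑(x + 2*Real.pi)) * Complex.I)
        = (-(n:ℂ) * x * Complex.I) + (-n : ℤ) * (2 * Real.pi * Complex.I) by push_cast; ring,
      Complex.exp_add, Complex.exp_int_mul_two_pi_mul_I, mul_one]
  have key : (∫ t in (0:ℝ)..(2*Real.pi), u (t + c) * Complex.exp (-(n : ℂ) * t * Complex.I))
      = Complex.exp ((n : ℂ) * c * Complex.I) * ∫ t in (0:ℝ)..(2*Real.pi), w t := by
    have h1 : ∀ t : ℝ, u (t + c) * Complex.exp (-(n : ℂ) * t * Complex.I)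
        = Complex.exp ((n : ℂ) * c * Complex.I) * w (t + c) := by
      intro t
      simp only [hw]
      have he : Complex.exp (-(n:ℂ) * ↑(t+c) * Complex.I) * Complex.exp ((n:ℂ) * c * Complex.I)
          = Complex.exp (-(n:ℂ) * t * Complex.I) := by
        rw [← Complex.exp_add]; congr 1; push_cast; ring
      rw [← he]
      ring
    simp_rw [h1]
    rw [intervalIntegral.integral_const_mul]
    congr 1
    rw [intervalIntegral.integral_comp_add_right]
    have := hwper.intervalIntegral_add_eq c 0
    simpa [zero_add, add_comm] using this
  rw [fourierCoeffR, key, fourierCoeffR]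
  ring

lemma coeffR_eq_fourierCoeff {g : ℝ → ℂ} (hg : Function.Periodic g (2*Real.pi)) (n : ℤ) :
    haveI : Fact (0 < 2*Real.pi) := ⟨Real.two_pi_pos⟩
    fourierCoeff hg.lift n = fourierCoeffR g n := by
  haveI : Fact (0 < 2*Real.pi) := ⟨Real.two_pi_pos⟩
  rw [fourierCoeff_eq_intervalIntegral _ n 0, fourierCoeffR]
  have hπ : (Real.pi : ℂ) ≠ 0 := by exact_mod_cast Real.pi_ne_zero
  rw [Complex.real_smul]
  push_cast
  rw [zero_add]
  congr 1
  apply intervalIntegral.integral_congr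
  intro x hx
  simp only []
  rw [fourier_coe_apply, smul_eq_mul, mul_comm, Function.Periodic.lift_coe]
  have : 2 * (Real.pi:ℂ) * Complex.I * (-n) * x / (2 * Real.pi) = -(n:ℂ) * x * Complex.I := by
    field_simp
  push_cast
  rw [this]

lemma bessel {g : ℝ → ℂ} (hg : Function.Periodic g (2*Real.pi)) (hc : Continuous g)
    {C : ℝ} (hC : 0 ≤ C) (hbound : ∀ t, ‖g t‖ ≤ C) (s : Finset ℤ) :
    ∑ n ∈ s, ‖fourierCoeffR g n‖ ^ 2 ≤ C ^ 2 := by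
  haveI : Fact (0 < 2*Real.pi) := ⟨Real.two_pi_pos⟩
  have hGc : Continuous hg.lift := hc.quotient_liftOn' _
  set G : C(AddCircle (2*Real.pi), ℂ) := ⟨hg.lift, hGc⟩ with hG
  set Glp := ContinuousMap.toLp (E := ℂ) 2 AddCircle.haarAddCircle ℂ G with hGlp
  have hrepr : ∀ n : ℤ, fourierBasis.repr Glp n = fourierCoeffR g n := by
    intro n
    rw [fourierBasis_repr, fourierCoeff_toLp, ← coeffR_eq_fourierCoeff hg n]
    rfl
  have hsum : ∑ n ∈ s, ‖fourierBasis.repr Glp n‖ ^ (2:ℝ) ≤ ‖fourierBasis.repr Glp‖ ^ (2:ℝ) := by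
    have := lp.sum_rpow_le_norm_rpow (p := 2) (by norm_num) (fourierBasis.repr Glp) s
    simpa using this
  have hnorm : ‖fourierBasis.repr Glp‖ = ‖Glp‖ := fourierBasis.repr.norm_map Glp
  have hGlpbound : ‖Glp‖ ≤ C := by
    have hb : ∀ᵐ x ∂(AddCircle.haarAddCircle : Measure (AddCircle (2*Real.pi))), ‖Glp x‖ ≤ C := by
      filter_upwards [ContinuousMap.coeFn_toLp (𝕜 := ℂ) (p := 2) AddCircle.haarAddCircle G]
        with x hx
      rw [hx]
      induction x using QuotientAddGroup.induction_on with
      | H t => simpa [hG, Function.Periodic.lift_coe] using hbound t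
    have := MeasureTheory.Lp.norm_le_of_ae_bound hC hb
    simpa [measureUnivNNReal, measure_univ] using this
  calc ∑ n ∈ s, ‖fourierCoeffR g n‖ ^ 2
      = ∑ n ∈ s, ‖fourierBasis.repr Glp n‖ ^ (2:ℝ) := by
        refine Finset.sum_congr rfl fun n _ => ?_
        rw [hrepr n, ← Real.rpow_natCast]
        norm_num
    _ ≤ ‖fourierBasis.repr Glp‖ ^ (2:ℝ) := hsum
    _ = ‖Glp‖ ^ 2 := by rw [hnorm, ← Real.rpow_natCast]; norm_num
    _ ≤ C ^ 2 := by
        apply pow_le_pow_left₀ (norm_nonneg _) hGlpbound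

lemma coeffR_sub {u v : ℝ → ℂ} (hu : Continuous u) (hv : Continuous v) (n : ℤ) :
    fourierCoeffR (fun t => u t - v t) n = fourierCoeffR u n - fourierCoeffR v n := by
  have he : Continuous fun t : ℝ => Complex.exp (-(n:ℂ) * t * Complex.I) := by fun_prop
  simp only [fourierCoeffR, sub_mul]
  rw [intervalIntegral.integral_sub (f := fun t => u t * Complex.exp (-(n:ℂ) * t * Complex.I))
    (g := fun t => v t * Complex.exp (-(n:ℂ) * t * Complex.I)) ((hu.mul he).intervalIntegrable _ _)
    ((hv.mul he).intervalIntegrable _ _)]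
  ring

lemma norm_exp_sub (θ : ℝ) :
    ‖Complex.exp (((-θ : ℝ) : ℂ) * Complex.I) - Complex.exp ((θ : ℝ) * Complex.I)‖
      = 2 * |Real.sin θ| := by
  have key : Complex.exp (((-θ : ℝ) : ℂ) * Complex.I) - Complex.exp ((θ : ℝ) * Complex.I)
      = -2 * (Real.sin θ : ℂ) * Complex.I := by
    rw [Complex.exp_mul_I, Complex.exp_mul_I]
    push_cast
    rw [Complex.cos_neg, Complex.sin_neg, ← Complex.ofReal_sin]
    ring
  rw [key]
  simp [norm_mul, Complex.norm_real, Real.norm_eq_abs]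
  simpa [Real.norm_eq_abs] using Complex.norm_real (Real.sin θ)

/-- Dyadic block estimate combining Parseval with the Hölder bound. -/
theorem stmt17 (m : ℕ) (f : ℝ → ℂ) (hper : Function.Periodic f (2 * Real.pi))
    (hf : ContDiff ℝ (m : ℕ∞) f) (α M : ℝ) (hα0 : 0 < α) (hα1 : α ≤ 1) (hM : 0 ≤ M)
    (hHol : ∀ t t' : ℝ, ‖iteratedDeriv m f t - iteratedDeriv m f t'‖ ≤
      M * ‖Complex.exp (t * Complex.I) - Complex.exp (t' * Complex.I)‖ ^ α)
    (j : ℕ) :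
    ∑ n ∈ (Finset.Icc (-(2 ^ (j + 1) : ℤ) + 1) ((2 : ℤ) ^ (j + 1) - 1)).filter
        (fun n => (2:ℤ) ^ j ≤ |n|),
      ‖fourierCoeffR f n‖ ^ 2 * (n : ℝ) ^ (2 * m) *
        Real.sin ((n : ℝ) * (Real.pi / (3 * 2 ^ j))) ^ 2 ≤
      Real.pi * M ^ 2 * (2 * (Real.pi / (3 * 2 ^ j))) ^ (2 * α) := by
  classical
  set s := (Finset.Icc (-(2 ^ (j + 1) : ℤ) + 1) ((2 : ℤ) ^ (j + 1) - 1)).filter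
      (fun n => (2:ℤ) ^ j ≤ |n|) with hs
  set h : ℝ := Real.pi / (3 * 2 ^ j) with hh
  have hh0 : 0 < h := by rw [hh]; positivity
  have hhπ : h ≤ Real.pi := by
    rw [hh]
    apply div_le_self Real.pi_pos.le
    have h2 : (1:ℝ) ≤ 2 ^ j := one_le_pow₀ (by norm_num)
    linarith
  set F := iteratedDeriv m f with hF
  have hFcont : Continuous F := hf.continuous_iteratedDeriv m (by exact_mod_cast le_refl m)
  have hFper : Function.Periodic F (2 * Real.pi) := periodic_iteratedDeriv hper m
  set g : ℝ → ℂ := fun t => F (t - h) - F (t + h) with hg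
  have hgper : Function.Periodic g (2 * Real.pi) := by
    intro x
    simp only [hg]
    rw [show x + 2*Real.pi - h = (x - h) + 2*Real.pi by ring,
        show x + 2*Real.pi + h = (x + h) + 2*Real.pi by ring, hFper, hFper]
  have hgc : Continuous g := by
    apply Continuous.sub
    · exact hFcont.comp (continuous_id.sub continuous_const)
    · exact hFcont.comp (continuous_id.add continuous_const)
  have hb : ∀ t, ‖g t‖ ≤ M * (2*h) ^ α := by
    intro t
    refine (hHol (t - h) (t + h)).trans ?_
    have hfac : Complex.exp ((t - h : ℝ) * Complex.I) - Complex.exp ((t + h : ℝ) * Complex.I)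
        = Complex.exp ((t:ℝ) * Complex.I) *
          (Complex.exp (((-h : ℝ):ℂ) * Complex.I) - Complex.exp ((h:ℝ) * Complex.I)) := by
      rw [mul_sub, ← Complex.exp_add, ← Complex.exp_add]
      congr 2 <;> push_cast <;> ring
    have hnorm : ‖Complex.exp ((t - h : ℝ) * Complex.I) - Complex.exp ((t + h : ℝ) * Complex.I)‖
        = 2 * |Real.sin h| := by
      rw [hfac, norm_mul, Complex.norm_exp_ofReal_mul_I, one_mul, norm_exp_sub]
    rw [hnorm]
    apply mul_le_mul_of_nonneg_left _ hM
    apply Real.rpow_le_rpow (by positivity) _ hα0.le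
    have h1 : |Real.sin h| = Real.sin h :=
      abs_of_nonneg (Real.sin_nonneg_of_nonneg_of_le_pi hh0.le hhπ)
    rw [h1]
    have := Real.sin_lt hh0
    linarith
  have hC : (0:ℝ) ≤ M * (2*h) ^ α := by positivity
  have key := bessel hgper hgc hC hb s
  have hterm : ∀ n ∈ s, ‖fourierCoeffR f n‖ ^ 2 * (n:ℝ) ^ (2*m) * Real.sin ((n:ℝ) * h) ^ 2
      = (1/4) * ‖fourierCoeffR g n‖ ^ 2 := by
    intro n hn
    have hn0 : n ≠ 0 := by
      rcases Finset.mem_filter.mp hn with ⟨-, h2⟩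
      intro h0
      rw [h0] at h2
      simp only [abs_zero] at h2
      exact absurd h2 (not_le.mpr (pow_pos (by norm_num) j))
    have hgsplit : g = fun t => F (t + (-h)) - F (t + h) := by
      funext t; simp [hg, sub_eq_add_neg]
    have hcg : fourierCoeffR g n
        = (Complex.exp ((n:ℂ) * ((-h : ℝ):ℂ) * Complex.I)
            - Complex.exp ((n:ℂ) * ((h:ℝ):ℂ) * Complex.I)) * fourierCoeffR F n := by
      rw [hgsplit, coeffR_sub (u := fun t => F (t + (-h))) (v := fun t => F (t + h))
        (hFcont.comp (continuous_id.add continuous_const))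
        (hFcont.comp (continuous_id.add continuous_const)) n,
        coeffR_shift hFper (-h) n, coeffR_shift hFper h n]
      ring
    have hcF : fourierCoeffR F n = (Complex.I * n) ^ m * fourierCoeffR f n := by
      rw [coeffR_eq, coeffR_eq, hF, coeffOn_iteratedDeriv m hper hf hn0]
    have hnorm1 : ‖Complex.exp ((n:ℂ) * ((-h : ℝ):ℂ) * Complex.I)
          - Complex.exp ((n:ℂ) * ((h:ℝ):ℂ) * Complex.I)‖ = 2 * |Real.sin ((n:ℝ) * h)| := by
      have e1 : (n:ℂ) * ((-h : ℝ):ℂ) = ((-(((n:ℝ)) * h) : ℝ) : ℂ) := by push_cast; ring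
      have e2 : (n:ℂ) * ((h:ℝ):ℂ) = ((((n:ℝ)) * h : ℝ) : ℂ) := by push_cast; ring
      rw [e1, e2, norm_exp_sub]
    have hnormF : ‖fourierCoeffR F n‖ = |(n:ℝ)| ^ m * ‖fourierCoeffR f n‖ := by
      rw [hcF, norm_mul, norm_pow, norm_mul, Complex.norm_I, one_mul]
      norm_cast
    have habs : (|(n:ℝ)| ^ m) ^ 2 = (n:ℝ) ^ (2*m) := by
      rw [← pow_mul, mul_comm m 2, (even_two_mul m).pow_abs]
    rw [hcg, norm_mul, hnorm1, hnormF, mul_pow, mul_pow, mul_pow, sq_abs, habs]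
    ring
  rw [Finset.sum_congr rfl hterm, ← Finset.mul_sum]
  have hsq : (M * (2*h)^α)^2 = M^2 * (2*h)^(2*α) := by
    rw [mul_pow, ← Real.rpow_natCast ((2*h)^α) 2, ← Real.rpow_mul (by positivity)]
    norm_num [mul_comm α 2]
  have hle : (1/4:ℝ) * ∑ n ∈ s, ‖fourierCoeffR g n‖ ^ 2 ≤ (1/4) * (M^2 * (2*h)^(2*α)) := by
    rw [← hsq]
    linarith
  refine hle.trans ?_
  have hπ4 : (1/4 : ℝ) ≤ Real.pi := by linarith [Real.pi_gt_three]
  have hx : (0:ℝ) ≤ M^2 * (2*h)^(2*α) := by positivity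
  calc (1/4:ℝ) * (M^2 * (2*h)^(2*α)) ≤ Real.pi * (M^2 * (2*h)^(2*α)) :=
        mul_le_mul_of_nonneg_right hπ4 hx
    _ = Real.pi * M^2 * (2*h)^(2*α) := by ring
end
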